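/- Let V*_1 be the King operator for n = 1, defined by V*_1 f(x) := (1 − x²)·f(0) + x²·f(1) for f : [0,1] → ℝ and x ∈ [0,1]. Then for all f, g : [0,1] → ℝ and all x ∈ [0,1], |V*_1(f·g)(x) − V*_1 f(x)·V*_1 g(x)| ≤ (1/4)·|f(0) − f(1)|·|g(0) − g(1)|. -/

import Mathlib

/-- The King operator for `n = 1`: `V*₁ f(x) = (1 - x²) f(0) + x² f(1)`. -/
noncomputable def kingOp1 (f : ℝ → ℝ) (x : ℝ) : ℝ :=
  (1 - x ^ 2) * f 0 + x ^ 2 * f 1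

theorem abs_mul_one_sub_le_quarter {α : Type*} [Field α] [LinearOrder α] [IsStrictOrderedRing α]
    {p : α} (h₀ : 0 ≤ p) (h₁ : p ≤ 1) : |p * (1 - p)| ≤ 1 / 4 := by
  rw [abs_of_nonneg (mul_nonneg h₀ (sub_nonneg.2 h₁))]
  nlinarith [sq_nonneg (p - 1 / 2)]

theorem kingOp1_mul_sub_mul (f g : ℝ → ℝ) (x : ℝ) :
    kingOp1 (fun t => f t * g t) x - kingOp1 f x * kingOp1 g x =
      x ^ 2 * (1 - x ^ 2) * ((f 0 - f 1) * (g 0 - g 1)) := by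
  unfold kingOp1
  ring

theorem king1_chebyshev_gruss (f g : ℝ → ℝ) (x : ℝ) (hx : x ∈ Set.Icc (0:ℝ) 1) :
    |kingOp1 (fun t => f t * g t) x - kingOp1 f x * kingOp1 g x| ≤
      (1 / 4) * |f 0 - f 1| * |g 0 - g 1| := by
  have hweight : |x ^ 2 * (1 - x ^ 2)| ≤ 1 / 4 :=
    abs_mul_one_sub_le_quarter (sq_nonneg x) (pow_le_one₀ hx.1 hx.2)
  rw [kingOp1_mul_sub_mul, abs_mul, abs_mul (f 0 - f 1), mul_assoc (1 / 4 : ℝ)]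
  exact mul_le_mul_of_nonneg_right hweight (by positivity)
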